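/- arXiv:1603.04258 — 2 statements merged into one kernel-verified Lean document; each statement's English description precedes it below -/
import Mathlib

section
/- Let G be the Hamming graph G = K_{n₁}□K_{n₂}□⋯□K_{n_r} with each n_i ≥ 2. Then the betweenness centrality of every vertex v of G is B(v) = (1/2)·(∏_{i=1}^r n_i)·( r − 1 − ∑_{i=1}^r 1/n_i ) + 1/2. -/
/-!
In the Hamming graph the distance is the Hamming distance `d`, and a shortest `u`–`v` path
corrects the coordinates in `D(u,v) = {i | uᵢ ≠ vᵢ}` one at a time in some order, so there are
`d(u,v)!` of them. Such a path can pass through `x` only if `D(u,x)` and `D(x,v)` are disjoint,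
and then `d(u,x)! d(x,v)!` of them do, so the pair dependency is `1 / C(d(u,v), d(u,x))`.
These pairs `(u,v)` correspond to a vertex `z` (equal to `u` on `D(u,x)` and to `v` elsewhere)
together with the subset `D(u,x)` of `D(z,x)`; summing `1 / C(|D(z,x)|, |A|)` over the proper
nonempty subsets `A` gives `d(z,x) - 1`. Hence `2 B(x) = ∑_{z ≠ x} (d(z,x) - 1)`, and the sum
of `d(z,x)` over all `z` is `∏ nᵢ · ∑ (1 - 1/nᵢ)`, as `zᵢ ≠ xᵢ` for a fraction `1 - 1/nᵢ` of
the vertices.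
-/

open SimpleGraph Finset

/-- The number of shortest `u`-`v` paths (geodesics) in `G`:
the number of paths from `u` to `v` whose length equals the distance `d_G(u,v)`. -/
noncomputable def geodesicCount {V : Type*} (G : SimpleGraph V) (u v : V) : ℕ :=
  Nat.card {p : G.Walk u v // p.IsPath ∧ p.length = G.dist u v}

/-- The number of shortest `u`-`v` paths in `G` that pass through the vertex `x`. -/
noncomputable def geodesicCountThrough {V : Type*} (G : SimpleGraph V) (u v x : V) : ℕ :=
  Nat.card {p : G.Walk u v // p.IsPath ∧ p.length = G.dist u v ∧ x ∈ p.support}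

/-- The pair-dependency of the pair `{u,v}` on `x`:
`δ(u,v|x) = σ(u,v|x) / σ(u,v)`. -/
noncomputable def pairDependency {V : Type*} (G : SimpleGraph V) (u v x : V) : ℚ :=
  (geodesicCountThrough G u v x : ℚ) / (geodesicCount G u v : ℚ)

/-- The betweenness centrality of a vertex `x`: the sum of the pair-dependencies
`σ(u,v|x)/σ(u,v)` over unordered pairs `{u,v}` with `u ≠ v`, `u ≠ x`, `v ≠ x`
(each unordered pair is counted once, hence the factor `1/2` over ordered pairs). -/
noncomputable def betweenness {V : Type*} [Fintype V] [DecidableEq V] (G : SimpleGraph V) (x : V) : ℚ :=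
  (1 / 2) * ∑ u, ∑ v,
    if u ≠ v ∧ u ≠ x ∧ v ≠ x then pairDependency G u v x else 0

/-- The Cartesian (box) product of a family of graphs: two tuples are adjacent iff
they agree in all but one coordinate and differ by an edge in that coordinate. -/
def boxProdPi {ι : Type*} {V : ι → Type*} (G : ∀ i, SimpleGraph (V i)) :
    SimpleGraph (∀ i, V i) where
  Adj u v := ∃ i, (G i).Adj (u i) (v i) ∧ ∀ j, j ≠ i → u j = v j
  symm := by
    constructor
    rintro u v ⟨i, hadj, heq⟩
    exact ⟨i, hadj.symm, fun j hj => (heq j hj).symm⟩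
  loopless := by
    constructor
    rintro u ⟨i, hadj, -⟩
    exact hadj.ne rfl

open Function
open scoped Nat

namespace SimpleGraph

variable {V : Type*} {G : SimpleGraph V}

theorem Walk.append_inj {u v w : V} {p₁ p₂ : G.Walk u v} {q₁ q₂ : G.Walk v w}
    (h : p₁.append q₁ = p₂.append q₂) (hl : p₁.length = p₂.length) : p₁ = p₂ ∧ q₁ = q₂ := by
  have hd := congrArg Walk.darts h
  rw [darts_append, darts_append] at hd
  obtain ⟨h₁, h₂⟩ := List.append_inj hd (by simpa using hl)
  exact ⟨darts_injective h₁, darts_injective h₂⟩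

theorem dist_add_dist_eq_of_mem_support {u v x : V} {p : G.Walk u v}
    (hp : p.length = G.dist u v) (hx : x ∈ p.support) :
    G.dist u x + G.dist x v = G.dist u v := by
  obtain ⟨q, r, rfl⟩ := Walk.mem_support_iff_exists_append.mp hx
  have := q.reachable.dist_triangle_left v
  have := G.dist_le q
  have := G.dist_le r
  rw [Walk.length_append] at hp
  omega

theorem natCard_walk_length_succ [Fintype V] [DecidableEq V] [DecidableRel G.Adj]
    (n : ℕ) (u v : V) :
    Nat.card {p : G.Walk u v // p.length = n + 1} =
      ∑ w ∈ G.neighborFinset u, Nat.card {p : G.Walk w v // p.length = n} := by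
  have hpow (n : ℕ) (u v : V) :
      Nat.card {p : G.Walk u v // p.length = n} = (G.adjMatrix ℕ ^ n) u v := by
    rw [adjMatrix_pow_apply_eq_card_walk, ← Nat.card_eq_fintype_card]
    rfl
  rw [hpow, pow_succ', adjMatrix_mul_apply]
  simp only [hpow]

end SimpleGraph

open SimpleGraph

section Geodesics

variable {V : Type*} {G : SimpleGraph V} {u v x : V}

theorem geodesicCount_eq_natCard :
    geodesicCount G u v = Nat.card {p : G.Walk u v // p.length = G.dist u v} :=
  Nat.card_congr <| Equiv.subtypeEquivRight fun p =>
    ⟨And.right, fun hp => ⟨p.isPath_of_length_eq_dist hp, hp⟩⟩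

theorem geodesicCountThrough_eq_natCard :
    geodesicCountThrough G u v x =
      Nat.card {p : G.Walk u v // p.length = G.dist u v ∧ x ∈ p.support} :=
  Nat.card_congr <| Equiv.subtypeEquivRight fun p =>
    ⟨And.right, fun hp => ⟨p.isPath_of_length_eq_dist hp.1, hp⟩⟩

theorem geodesicCountThrough_eq :
    geodesicCountThrough G u v x =
      if G.dist u x + G.dist x v = G.dist u v then
        geodesicCount G u x * geodesicCount G x v
      else 0 := by
  rw [geodesicCountThrough_eq_natCard]
  split_ifs with h
  · rw [geodesicCount_eq_natCard, geodesicCount_eq_natCard, ← Nat.card_prod]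
    symm
    refine Nat.card_eq_of_bijective
      (fun qr => ⟨qr.1.1.append qr.2.1, by rw [Walk.length_append, qr.1.2, qr.2.2, h],
        (Walk.mem_support_append_iff _ _).mpr (.inl qr.1.1.end_mem_support)⟩) ⟨?_, ?_⟩
    · rintro ⟨⟨q₁, hq₁⟩, ⟨r₁, _⟩⟩ ⟨⟨q₂, hq₂⟩, ⟨r₂, _⟩⟩ he
      obtain ⟨rfl, rfl⟩ := Walk.append_inj (congrArg Subtype.val he) (hq₁.trans hq₂.symm)
      rfl
    · rintro ⟨p, hp, hx⟩
      obtain ⟨q, r, rfl⟩ := Walk.mem_support_iff_exists_append.mp hx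
      have := G.dist_le q
      have := G.dist_le r
      rw [Walk.length_append] at hp
      exact ⟨⟨⟨q, by omega⟩, ⟨r, by omega⟩⟩, rfl⟩
  · have : IsEmpty {p : G.Walk u v // p.length = G.dist u v ∧ x ∈ p.support} :=
      ⟨fun ⟨_, hp, hx⟩ => h (dist_add_dist_eq_of_mem_support hp hx)⟩
    exact Nat.card_of_isEmpty

theorem pairDependency_eq :
    pairDependency G u v x =
      if G.dist u x + G.dist x v = G.dist u v then
        (geodesicCount G u x * geodesicCount G x v : ℚ) / geodesicCount G u v
      else 0 := by
  rw [pairDependency, geodesicCountThrough_eq]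
  split_ifs <;> simp

end Geodesics

def hammingGraph {ι : Type*} (β : ι → Type*) : SimpleGraph (∀ i, β i) :=
  boxProdPi fun i => (⊤ : SimpleGraph (β i))

theorem hammingGraph_adj_update {ι : Type*} [DecidableEq ι] {β : ι → Type*} {u : ∀ i, β i}
    {i : ι} {a : β i} (ha : a ≠ u i) : (hammingGraph β).Adj u (update u i a) :=
  ⟨i, by simpa using ha.symm, fun j hj => (update_of_ne hj a u).symm⟩

section Hamming

variable {ι : Type*} [Fintype ι] {β : ι → Type*} [∀ i, DecidableEq (β i)]

def diffCoords (x y : ∀ i, β i) : Finset ι := {i | x i ≠ y i}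

theorem hammingDist_eq_card_diffCoords (x y : ∀ i, β i) :
    hammingDist x y = #(diffCoords x y) := rfl

@[simp]
theorem mem_diffCoords {x y : ∀ i, β i} {i : ι} : i ∈ diffCoords x y ↔ x i ≠ y i := by
  simp [diffCoords]

theorem diffCoords_comm (x y : ∀ i, β i) : diffCoords x y = diffCoords y x := by
  ext; simp [ne_comm]

theorem diffCoords_nonempty {x y : ∀ i, β i} : (diffCoords x y).Nonempty ↔ x ≠ y := by
  rw [← card_pos, ← hammingDist_eq_card_diffCoords, hammingDist_pos]

theorem hammingDist_eq_one_of_adj {u w : ∀ i, β i} (h : (hammingGraph β).Adj u w) :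
    hammingDist u w = 1 := by
  obtain ⟨i, hi, hj⟩ := h
  rw [hammingDist_eq_card_diffCoords, card_eq_one]
  refine ⟨i, ext fun j => ?_⟩
  rw [mem_diffCoords, mem_singleton]
  exact ⟨fun hne => by_contra fun hji => hne (hj j hji), fun h => h ▸ hi⟩

theorem hammingDist_le_length {u v : ∀ i, β i} (p : (hammingGraph β).Walk u v) :
    hammingDist u v ≤ p.length := by
  induction p with
  | nil => simp
  | @cons u w v h q ih =>
    have := hammingDist_triangle u w v
    rw [hammingDist_eq_one_of_adj h] at this
    rw [Walk.length_cons]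
    omega

variable [DecidableEq ι]

theorem diffCoords_update_left (u v : ∀ i, β i) (i : ι) (a : β i) :
    diffCoords (update u i a) v =
      if a = v i then (diffCoords u v).erase i else insert i (diffCoords u v) := by
  ext j
  rcases eq_or_ne j i with rfl | hj
  · split_ifs <;> simp_all
  · split_ifs <;> simp [hj]

theorem hammingDist_update_add_one {u v : ∀ i, β i} {i : ι} (hi : i ∈ diffCoords u v) :
    hammingDist (update u i (v i)) v + 1 = hammingDist u v := by
  rw [hammingDist_eq_card_diffCoords, hammingDist_eq_card_diffCoords, diffCoords_update_left,
    if_pos rfl, card_erase_add_one hi]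

theorem exists_walk_length_eq_hammingDist (u v : ∀ i, β i) :
    ∃ p : (hammingGraph β).Walk u v, p.length = hammingDist u v := by
  induction h : hammingDist u v generalizing u with
  | zero =>
    obtain rfl := hammingDist_eq_zero.mp h
    exact ⟨.nil, rfl⟩
  | succ d ih =>
    obtain ⟨i, hi⟩ := diffCoords_nonempty.mpr (hammingDist_pos.mp (by omega) : u ≠ v)
    have := hammingDist_update_add_one hi
    obtain ⟨p, hp⟩ := ih (update u i (v i)) (by omega)
    exact ⟨.cons (hammingGraph_adj_update (mem_diffCoords.mp hi).symm) p, by simp [hp]⟩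

theorem dist_hammingGraph (u v : ∀ i, β i) : (hammingGraph β).dist u v = hammingDist u v := by
  obtain ⟨p, hp⟩ := exists_walk_length_eq_hammingDist u v
  obtain ⟨q, hq⟩ := p.reachable.exists_walk_length_eq_dist
  exact le_antisymm (hp ▸ dist_le p) (hq ▸ hammingDist_le_length q)

theorem hammingDist_add_hammingDist_eq_iff_disjoint {u v x : ∀ i, β i} :
    hammingDist u x + hammingDist x v = hammingDist u v ↔
      Disjoint (diffCoords u x) (diffCoords x v) := by
  have hsub : diffCoords u v ⊆ diffCoords u x ∪ diffCoords x v := fun i => by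
    simp only [mem_diffCoords, mem_union]
    contrapose!
    exact fun h => h.1.trans h.2
  simp only [hammingDist_eq_card_diffCoords]
  constructor
  · intro h
    have := card_le_card hsub
    have := card_union_add_card_inter (diffCoords u x) (diffCoords x v)
    rw [disjoint_iff_inter_eq_empty, ← card_eq_zero]
    omega
  · intro h
    rw [← card_union_of_disjoint h, eq_comm]
    refine congrArg card (hsub.antisymm fun i hi => ?_)
    rcases mem_union.mp hi with hi | hi
    · have : x i = v i := by simpa using disjoint_left.mp h hi
      exact mem_diffCoords.mpr (this ▸ mem_diffCoords.mp hi)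
    · have : u i = x i := by simpa using disjoint_right.mp h hi
      exact mem_diffCoords.mpr (this ▸ mem_diffCoords.mp hi)

theorem diffCoords_piecewise_left (A : Finset ι) (z x : ∀ i, β i) :
    diffCoords (A.piecewise z x) x = A ∩ diffCoords z x := by
  ext i
  by_cases hi : i ∈ A <;> simp [hi]

theorem diffCoords_piecewise_right (A : Finset ι) (z x : ∀ i, β i) :
    diffCoords x (A.piecewise x z) = diffCoords x z \ A := by
  ext i
  by_cases hi : i ∈ A <;> simp [hi]

end Hamming

section HammingCount

variable {ι : Type*} [Fintype ι] [DecidableEq ι] {β : ι → Type*} [∀ i, Fintype (β i)]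
  [∀ i, DecidableEq (β i)]

instance : DecidableRel (hammingGraph β).Adj := fun u v =>
  inferInstanceAs (Decidable (∃ i, u i ≠ v i ∧ ∀ j, j ≠ i → u j = v j))

theorem filter_neighborFinset_hammingDist_eq {u v : ∀ i, β i} {d : ℕ}
    (h : hammingDist u v = d + 1) :
    {w ∈ (hammingGraph β).neighborFinset u | hammingDist w v = d} =
      (diffCoords u v).image fun i => update u i (v i) := by
  ext w
  simp only [mem_filter, mem_neighborFinset, mem_image]
  constructor
  · rintro ⟨⟨i, hi, hj⟩, hw⟩
    have hwu : update u i (w i) = w := funext fun j => by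
      rcases eq_or_ne j i with rfl | hji
      · simp
      · simp [hji, hj j hji]
    have hd := hammingDist_eq_card_diffCoords (update u i (w i)) v
    rw [diffCoords_update_left, hwu] at hd
    split_ifs at hd with hwi
    · refine ⟨i, ?_, by rw [← hwi, hwu]⟩
      exact mem_diffCoords.mpr (hwi ▸ hi)
    · have := card_le_card (subset_insert i (diffCoords u v))
      rw [← hammingDist_eq_card_diffCoords] at this
      omega
  · rintro ⟨i, hi, rfl⟩
    have := hammingDist_update_add_one hi
    exact ⟨hammingGraph_adj_update (mem_diffCoords.mp hi).symm, by omega⟩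

theorem card_filter_neighborFinset_hammingDist_eq {u v : ∀ i, β i} {d : ℕ}
    (h : hammingDist u v = d + 1) :
    #{w ∈ (hammingGraph β).neighborFinset u | hammingDist w v = d} = d + 1 := by
  rw [filter_neighborFinset_hammingDist_eq h, card_image_of_injOn, ← h,
    hammingDist_eq_card_diffCoords]
  intro i hi j _ hij
  by_contra hne
  have := congrFun hij i
  simp only [update_self, update_of_ne hne] at this
  exact mem_diffCoords.mp hi this.symm

theorem natCard_walk_length_hammingDist (u v : ∀ i, β i) :
    Nat.card {p : (hammingGraph β).Walk u v // p.length = hammingDist u v} =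
      (hammingDist u v)! := by
  induction h : hammingDist u v generalizing u with
  | zero =>
    obtain rfl := hammingDist_eq_zero.mp h
    rw [Nat.factorial_zero, Nat.card_eq_one_iff_exists]
    exact ⟨⟨.nil, rfl⟩, fun ⟨p, hp⟩ => Subtype.ext (Walk.length_eq_zero_iff.mp hp).eq_nil⟩
  | succ d ih =>
    have hcount (w : ∀ i, β i) (hw : (hammingGraph β).Adj u w) :
        Nat.card {p : (hammingGraph β).Walk w v // p.length = d} =
          if hammingDist w v = d then d ! else 0 := by
      split_ifs with hwv
      · exact ih w hwv
      · have := hammingDist_triangle u w v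
        rw [hammingDist_eq_one_of_adj hw] at this
        have : IsEmpty {p : (hammingGraph β).Walk w v // p.length = d} :=
          ⟨fun ⟨p, hp⟩ => by have := hammingDist_le_length p; omega⟩
        exact Nat.card_of_isEmpty
    rw [natCard_walk_length_succ,
      sum_congr rfl fun w hw => hcount w ((mem_neighborFinset _ _ _).mp hw), ← sum_filter,
      sum_const, card_filter_neighborFinset_hammingDist_eq h, smul_eq_mul,
      Nat.factorial_succ]

theorem geodesicCount_hammingGraph (u v : ∀ i, β i) :
    geodesicCount (hammingGraph β) u v = (hammingDist u v)! := by
  rw [geodesicCount_eq_natCard, dist_hammingGraph, natCard_walk_length_hammingDist]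

theorem pairDependency_hammingGraph (u v x : ∀ i, β i) :
    pairDependency (hammingGraph β) u v x =
      if Disjoint (diffCoords u x) (diffCoords x v) then
        (((hammingDist u v).choose (hammingDist u x) : ℕ) : ℚ)⁻¹
      else 0 := by
  simp only [pairDependency_eq, dist_hammingGraph, geodesicCount_hammingGraph,
    ← hammingDist_add_hammingDist_eq_iff_disjoint]
  split_ifs with h
  · rw [← h, Nat.cast_add_choose, inv_div]
  · rfl

end HammingCount

/-- For `A = diffCoords u x` and `B = diffCoords x v` this is the pair dependency `δ(u,v|x)` in the
Hamming graph: `|A|! |B|!` of the `(|A| + |B|)!` shortest paths pass through `x`. -/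
def splitDependency {ι : Type*} [DecidableEq ι] (A B : Finset ι) : ℚ :=
  if A.Nonempty ∧ B.Nonempty ∧ Disjoint A B then (((#A + #B).choose #A : ℕ) : ℚ)⁻¹ else 0

theorem sum_powerset_splitDependency {ι : Type*} [DecidableEq ι] (C : Finset ι) :
    ∑ A ∈ C.powerset, splitDependency A (C \ A) = ((#C - 1 : ℕ) : ℚ) := by
  have hterm (A) (hA : A ∈ C.powerset) : splitDependency A (C \ A) =
      if 0 < #A ∧ #A < #C then (((#C).choose #A : ℕ) : ℚ)⁻¹ else 0 := by
    have hcard := card_sdiff_add_card_eq_card (mem_powerset.mp hA)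
    have hlt : 0 < #(C \ A) ↔ #A < #C := by omega
    simp only [splitDependency, disjoint_sdiff, and_true, ← card_pos, hlt, add_comm #A, hcard]
  have hchoose (k) (_ : k ∈ range (#C + 1)) : (#C).choose k •
      (if 0 < k ∧ k < #C then (((#C).choose k : ℕ) : ℚ)⁻¹ else 0) =
        if 0 < k ∧ k < #C then 1 else 0 := by
    split_ifs with h
    · rw [nsmul_eq_mul, mul_inv_cancel₀ (Nat.cast_ne_zero.mpr (Nat.choose_pos h.2.le).ne')]
    · rw [smul_zero]
  have hIoo : {k ∈ range (#C + 1) | 0 < k ∧ k < #C} = Ioo 0 #C := by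
    ext k
    simp only [mem_filter, mem_range, mem_Ioo]
    omega
  rw [sum_congr rfl hterm, sum_powerset_apply_card (fun k =>
      if 0 < k ∧ k < #C then (((#C).choose k : ℕ) : ℚ)⁻¹ else 0),
    sum_congr rfl hchoose, sum_boole, hIoo, Nat.card_Ioo, Nat.sub_zero]

section Betweenness

variable {ι : Type*} [Fintype ι] [DecidableEq ι] {β : ι → Type*} [∀ i, Fintype (β i)]
  [∀ i, DecidableEq (β i)]

theorem ite_pairDependency_hammingGraph (u v x : ∀ i, β i) :
    (if u ≠ v ∧ u ≠ x ∧ v ≠ x then pairDependency (hammingGraph β) u v x else 0) =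
      splitDependency (diffCoords u x) (diffCoords x v) := by
  rw [pairDependency_hammingGraph, splitDependency]
  by_cases hd : Disjoint (diffCoords u x) (diffCoords x v)
  · have huv : u ≠ x → u ≠ v := by
      rintro hux rfl
      rw [diffCoords_comm x, disjoint_self, bot_eq_empty, ← not_nonempty_iff_eq_empty,
        diffCoords_nonempty, not_not] at hd
      exact hux hd
    rw [← hammingDist_add_hammingDist_eq_iff_disjoint.mpr hd, hammingDist_eq_card_diffCoords u x,
      hammingDist_eq_card_diffCoords x v, if_pos hd]
    refine if_congr ?_ rfl rfl
    rw [diffCoords_nonempty, diffCoords_nonempty]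
    exact ⟨fun h => ⟨h.2.1, h.2.2.symm, hd⟩, fun h => ⟨huv h.1, h.1, h.2.1.symm⟩⟩
  · simp [hd]

theorem sum_sum_diffCoords_eq_sum_sum_powerset {M : Type*} [AddCommMonoid M] (x : ∀ i, β i)
    (F : Finset ι → Finset ι → M) (hF : ∀ A B, ¬Disjoint A B → F A B = 0) :
    ∑ u, ∑ v, F (diffCoords u x) (diffCoords x v) =
      ∑ z, ∑ A ∈ (diffCoords z x).powerset, F A (diffCoords z x \ A) := by
  rw [← sum_product', ← sum_filter_of_ne (p := fun uv : (∀ i, β i) × (∀ i, β i) =>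
    Disjoint (diffCoords uv.1 x) (diffCoords x uv.2)) fun uv _ h => by_contra (h <| hF _ _ ·),
    sum_sigma']
  symm
  refine sum_nbij' (fun zA => (zA.2.piecewise zA.1 x, zA.2.piecewise x zA.1))
    (fun uv => ⟨(diffCoords uv.1 x).piecewise uv.1 uv.2, diffCoords uv.1 x⟩) ?_ ?_ ?_ ?_ ?_
  · rintro ⟨z, A⟩ -
    rw [mem_filter, diffCoords_piecewise_left, diffCoords_piecewise_right]
    exact ⟨mem_product.mpr ⟨mem_univ _, mem_univ _⟩, disjoint_sdiff.mono_left inter_subset_left⟩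
  · rintro ⟨u, v⟩ -
    refine mem_sigma.mpr ⟨mem_univ _, mem_powerset.mpr fun i (hi : i ∈ diffCoords u x) => ?_⟩
    simpa [piecewise_eq_of_mem _ _ _ hi] using hi
  · rintro ⟨z, A⟩ hA
    have hA : A ⊆ diffCoords z x := mem_powerset.mp (mem_sigma.mp hA).2
    dsimp only
    rw [diffCoords_piecewise_left, inter_eq_left.mpr hA]
    congr 1
    ext i
    by_cases hi : i ∈ A <;> simp [hi]
  · rintro ⟨u, v⟩ huv
    have huv := (mem_filter.mp huv).2
    dsimp only
    refine Prod.ext (funext fun i => ?_) (funext fun i => ?_) <;>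
      by_cases hi : i ∈ diffCoords u x
    · simp [hi]
    · simp_all
    · simpa [hi] using disjoint_left.mp huv hi
    · simp [hi]
  · rintro ⟨z, A⟩ hA
    have hA : A ⊆ diffCoords z x := mem_powerset.mp (mem_sigma.mp hA).2
    dsimp only
    rw [diffCoords_piecewise_left, diffCoords_piecewise_right, inter_eq_left.mpr hA,
      diffCoords_comm x z]

theorem sum_hammingDist_left (x : ∀ i, β i) :
    ∑ z, (hammingDist z x : ℚ) =
      (∏ i, (Fintype.card (β i) : ℚ)) * ∑ i, (1 - 1 / (Fintype.card (β i) : ℚ)) := by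
  have hcoord (i : ι) : (#{z : ∀ i, β i | z i ≠ x i} : ℚ) =
      (∏ j, (Fintype.card (β j) : ℚ)) * (1 - 1 / Fintype.card (β i)) := by
    have hfiber := Fintype.card_filter_piFinset_eq_of_mem (fun j => (univ : Finset (β j))) i
      (mem_univ (x i))
    simp only [Fintype.piFinset_univ, card_univ] at hfiber
    have hprod := prod_erase_mul univ (fun j => (Fintype.card (β j) : ℚ)) (mem_univ i)
    have hsplit := card_filter_add_card_filter_not (s := univ) fun z : ∀ i, β i => z i = x i
    rw [card_univ, Fintype.card_pi] at hsplit
    have : Nonempty (β i) := ⟨x i⟩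
    have hne : (Fintype.card (β i) : ℚ) ≠ 0 := Nat.cast_ne_zero.mpr Fintype.card_ne_zero
    replace hsplit : (#{z : ∀ i, β i | z i = x i} : ℚ) + #{z : ∀ i, β i | z i ≠ x i} =
        ∏ j, (Fintype.card (β j) : ℚ) := by exact_mod_cast hsplit
    rw [hfiber, Nat.cast_prod] at hsplit
    field_simp
    linear_combination (Fintype.card (β i) : ℚ) * hsplit - hprod
  have hswap : ∑ z : ∀ i, β i, hammingDist z x = ∑ i, #{z : ∀ i, β i | z i ≠ x i} := by
    simp only [hammingDist, card_filter]
    exact sum_comm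
  rw [← Nat.cast_sum, hswap, Nat.cast_sum, mul_sum]
  exact sum_congr rfl fun i _ => hcoord i

theorem betweenness_hammingGraph_eq_sum (x : ∀ i, β i) :
    betweenness (hammingGraph β) x = 1 / 2 * ∑ z, ((hammingDist z x - 1 : ℕ) : ℚ) := by
  have hdisj (A B : Finset ι) (h : ¬Disjoint A B) : splitDependency A B = 0 :=
    if_neg fun hc => h hc.2.2
  rw [betweenness]
  simp only [ite_pairDependency_hammingGraph]
  rw [sum_sum_diffCoords_eq_sum_sum_powerset x _ hdisj]
  simp only [sum_powerset_splitDependency, ← hammingDist_eq_card_diffCoords]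

theorem betweenness_hammingGraph (x : ∀ i, β i) :
    betweenness (hammingGraph β) x =
      1 / 2 * (∏ i, (Fintype.card (β i) : ℚ)) *
        ((Fintype.card ι : ℚ) - 1 - ∑ i, 1 / (Fintype.card (β i) : ℚ)) + 1 / 2 := by
  have hdist (z : ∀ i, β i) :
      ((hammingDist z x - 1 : ℕ) : ℚ) = hammingDist z x - 1 + if z = x then 1 else 0 := by
    rcases eq_or_ne z x with rfl | hz
    · simp
    · rw [Nat.cast_sub (hammingDist_pos.mpr hz), if_neg hz]
      push_cast
      ring
  rw [betweenness_hammingGraph_eq_sum, sum_congr rfl fun z _ => hdist z, sum_add_distrib,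
    sum_sub_distrib, sum_ite_eq', if_pos (mem_univ x), sum_hammingDist_left, sum_sub_distrib]
  simp only [sum_const, card_univ, Fintype.card_pi, nsmul_eq_mul, Nat.cast_prod, mul_one]
  ring

end Betweenness

theorem betweenness_hamming_general {r : ℕ} (n : Fin r → ℕ)
    (v : ∀ i, Fin (n i)) :
    betweenness (boxProdPi fun i => (⊤ : SimpleGraph (Fin (n i)))) v =
      (1 / 2) * (∏ i, (n i : ℚ)) * ((r : ℚ) - 1 - ∑ i, (1 : ℚ) / (n i : ℚ)) + 1 / 2 := by
  simpa [hammingGraph] using betweenness_hammingGraph v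

/-- In the Hamming graph `K_{n₁} □ ⋯ □ K_{n_r}` (each `nᵢ ≥ 2`),
every vertex `v` has betweenness centrality
`B(v) = (1/2)·(∏ᵢ nᵢ)·(r - 1 - ∑ᵢ 1/nᵢ) + 1/2`. -/
theorem betweenness_hamming {r : ℕ} (n : Fin r → ℕ) (hn : ∀ i, 2 ≤ n i)
    (v : ∀ i, Fin (n i)) :
    betweenness (boxProdPi fun i => (⊤ : SimpleGraph (Fin (n i)))) v =
      (1 / 2) * (∏ i, (n i : ℚ)) * ((r : ℚ) - 1 - ∑ i, (1 : ℚ) / (n i : ℚ)) + 1 / 2 :=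
  betweenness_hamming_general n v
end

section
/- Let n ≥ 2, r ≥ 1, and let v be any vertex of the r-fold Cartesian product □_{i=1}^r K_n of the complete graph K_n with itself. Then the betweenness centrality of v is B(v) = (1/2)·( (r−1)·n^r − r·n^{r−1} + 1 ). -/
open SimpleGraph Finset

/-!
Summing the betweenness over all vertices `x` counts, for each ordered pair `u ≠ w`, the
interior vertices of a geodesic averaged over all geodesics; a geodesic has `d(u,w) + 1`
vertices, so this average is `d(u,w) - 1`. Betweenness is invariant under graph
isomorphisms, and coordinatewise transpositions act transitively on `□ K_n` by
automorphisms, so every vertex carries `1/n^r` of the total. Distance in `□ K_n` is Hamming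
distance, and `∑_w d(u,w) = r (n^r - n^(r-1))`: for each coordinate, `n^r - n^(r-1)` tuples
differ from `u` there.
-/

namespace SimpleGraph

variable {V V' : Type*} {G : SimpleGraph V} {G' : SimpleGraph V'}

theorem Hom.dist_map_le (f : G →g G') {u w : V} (h : G.Reachable u w) :
    G'.dist (f u) (f w) ≤ G.dist u w := by
  obtain ⟨p, hp⟩ := h.exists_walk_length_eq_dist
  simpa [hp] using dist_le (p.map f)

theorem Iso.dist_eq (φ : G ≃g G') (u w : V) : G'.dist (φ u) (φ w) = G.dist u w := by
  by_cases h : G.Reachable u w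
  · refine le_antisymm (Hom.dist_map_le φ.toHom h) ?_
    simpa using Hom.dist_map_le φ.symm.toHom ((Iso.reachable_iff (φ := φ)).mpr h)
  · rw [dist_eq_zero_of_not_reachable h,
      dist_eq_zero_of_not_reachable (mt (Iso.reachable_iff (φ := φ)).mp h)]

theorem geodesicCountThrough_left (u w : V) :
    geodesicCountThrough G u w u = geodesicCount G u w :=
  Nat.card_congr <| Equiv.subtypeEquivRight fun p => by simp [p.start_mem_support]

theorem geodesicCountThrough_right (u w : V) :
    geodesicCountThrough G u w w = geodesicCount G u w :=
  Nat.card_congr <| Equiv.subtypeEquivRight fun p => by simp [p.end_mem_support]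

instance [Finite V] (u w x : V) :
    Finite {p : G.Walk u w // p.IsPath ∧ p.length = G.dist u w ∧ x ∈ p.support} := by
  classical
  have := Fintype.ofFinite V
  refine Finite.of_injective
    (fun p => (⟨p.1, p.2.1, p.2.2.1⟩ : {p : G.Walk u w // p.IsPath ∧ p.length = G.dist u w}))
    fun p q h => Subtype.ext (congrArg (·.1) h)

theorem geodesicCount_pos [Finite V] {u w : V} (h : G.Reachable u w) :
    0 < geodesicCount G u w := by
  rw [← geodesicCountThrough_left]
  obtain ⟨p, hp, hlen⟩ := h.exists_path_of_dist
  exact Nat.card_pos_iff.mpr ⟨⟨⟨p, hp, hlen, p.start_mem_support⟩⟩, inferInstance⟩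

theorem Iso.geodesicCountThrough_le (φ : G ≃g G') [Finite V'] (u w x : V) :
    geodesicCountThrough G u w x ≤ geodesicCountThrough G' (φ u) (φ w) (φ x) := by
  refine Nat.card_le_card_of_injective
    (fun p => ⟨p.1.map φ.toHom, (Walk.isPath_map_iff_of_injective φ.injective).mpr p.2.1,
      by rw [Walk.length_map, p.2.2.1, Iso.dist_eq],
      by rw [Walk.support_map]; exact List.mem_map_of_mem p.2.2.2⟩) ?_
  intro p q h
  exact Subtype.ext (Walk.map_injective_of_injective φ.injective u w (congrArg Subtype.val h))

theorem Iso.geodesicCountThrough_eq (φ : G ≃g G') [Finite V] [Finite V'] (u w x : V) :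
    geodesicCountThrough G' (φ u) (φ w) (φ x) = geodesicCountThrough G u w x :=
  le_antisymm (by simpa using φ.symm.geodesicCountThrough_le (φ u) (φ w) (φ x))
    (φ.geodesicCountThrough_le u w x)

theorem Iso.pairDependency_eq (φ : G ≃g G') [Finite V] [Finite V'] (u w x : V) :
    pairDependency G' (φ u) (φ w) (φ x) = pairDependency G u w x := by
  simp only [pairDependency, ← geodesicCountThrough_left, φ.geodesicCountThrough_eq]

theorem pairDependency_left [Finite V] {u w : V} (h : G.Reachable u w) :
    pairDependency G u w u = 1 := by
  have hpos : (geodesicCount G u w : ℚ) ≠ 0 := by exact_mod_cast (geodesicCount_pos h).ne'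
  rw [pairDependency, geodesicCountThrough_left, div_self hpos]

theorem pairDependency_right [Finite V] {u w : V} (h : G.Reachable u w) :
    pairDependency G u w w = 1 := by
  have hpos : (geodesicCount G u w : ℚ) ≠ 0 := by exact_mod_cast (geodesicCount_pos h).ne'
  rw [pairDependency, geodesicCountThrough_right, div_self hpos]

section Fintype

variable [Fintype V] [DecidableEq V]

theorem Iso.betweenness_eq [Fintype V'] [DecidableEq V'] (φ : G ≃g G') (x : V) :
    betweenness G' (φ x) = betweenness G x := by
  simp only [betweenness, ← φ.toEquiv.sum_comp, RelIso.coe_fn_toEquiv, φ.injective.ne_iff,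
    φ.pairDependency_eq]

theorem sum_geodesicCountThrough (u w : V) :
    ∑ x, geodesicCountThrough G u w x = (G.dist u w + 1) * geodesicCount G u w := by
  classical
  let T := {p : G.Walk u w // p.IsPath ∧ p.length = G.dist u w}
  have hthrough : ∀ x, geodesicCountThrough G u w x = #{p : T | x ∈ p.1.support} := fun x => by
    rw [← Fintype.card_subtype, ← Nat.card_eq_fintype_card]
    exact Nat.card_congr <| (Equiv.subtypeEquivRight fun _ => and_assoc.symm).trans
      (Equiv.subtypeSubtypeEquivSubtypeInter _ _).symm
  have hsupport : ∀ p : T, #{x | x ∈ p.1.support} = G.dist u w + 1 := fun p => by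
    rw [show ({x | x ∈ p.1.support} : Finset V) = p.1.support.toFinset by ext; simp,
      List.toFinset_card_of_nodup p.2.1.support_nodup, Walk.length_support, p.2.2]
  simp only [hthrough, Finset.card_filter]
  rw [Finset.sum_comm]
  simp only [← Finset.card_filter, hsupport, Finset.sum_const, smul_eq_mul, Finset.card_univ,
    ← Nat.card_eq_fintype_card, geodesicCount, mul_comm]
  rfl

theorem sum_pairDependency {u w : V} (h : G.Reachable u w) :
    ∑ x, pairDependency G u w x = G.dist u w + 1 := by
  have hpos : (geodesicCount G u w : ℚ) ≠ 0 := by exact_mod_cast (geodesicCount_pos h).ne'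
  simp only [pairDependency, ← Finset.sum_div]
  rw [← Nat.cast_sum, sum_geodesicCountThrough]
  push_cast
  field_simp

theorem sum_erase_erase_pairDependency {u w : V} (h : G.Reachable u w) (huw : u ≠ w) :
    ∑ x ∈ (univ.erase u).erase w, pairDependency G u w x = G.dist u w - 1 := by
  have hsum := sum_pairDependency h
  rw [← Finset.add_sum_erase _ _ (mem_univ u),
    ← Finset.add_sum_erase _ _ (mem_erase.mpr ⟨huw.symm, mem_univ w⟩),
    pairDependency_left h, pairDependency_right h] at hsum
  linarith

theorem sum_betweenness (hG : G.Connected) :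
    ∑ x, betweenness G x = (1 / 2) * ∑ u, ∑ w ∈ univ.erase u, ((G.dist u w : ℚ) - 1) := by
  simp only [betweenness, ← Finset.mul_sum]
  congr 1
  rw [Finset.sum_comm]
  refine Finset.sum_congr rfl fun u _ => ?_
  rw [Finset.sum_comm, ← Finset.sum_erase (a := u) _ (by simp)]
  refine Finset.sum_congr rfl fun w hw => ?_
  have huw : u ≠ w := (Finset.ne_of_mem_erase hw).symm
  rw [← sum_erase_erase_pairDependency (hG u w) huw, ← Finset.sum_filter]
  congr 1
  ext x
  simp [huw, eq_comm, and_comm]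

theorem card_mul_betweenness_eq_sum {v : V} (htrans : ∀ x, ∃ φ : G ≃g G, φ v = x) :
    Fintype.card V * betweenness G v = ∑ x, betweenness G x := by
  rw [← nsmul_eq_mul, ← Finset.card_univ, ← Finset.sum_const]
  refine Finset.sum_congr rfl fun x _ => ?_
  obtain ⟨φ, rfl⟩ := htrans x
  exact (φ.betweenness_eq v).symm

end Fintype

end SimpleGraph

section BoxProdPi

variable {ι : Type*} {V W : ι → Type*}

theorem boxProdPi_adj {G : ∀ i, SimpleGraph (V i)} {u w : ∀ i, V i} :
    (boxProdPi G).Adj u w ↔ ∃ i, (G i).Adj (u i) (w i) ∧ ∀ j, j ≠ i → u j = w j :=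
  Iff.rfl

def boxProdPiCongr {G : ∀ i, SimpleGraph (V i)} {H : ∀ i, SimpleGraph (W i)}
    (e : ∀ i, G i ≃g H i) : boxProdPi G ≃g boxProdPi H where
  toEquiv := Equiv.piCongrRight fun i => (e i).toEquiv
  map_rel_iff' {u w} := by
    simp only [boxProdPi_adj, Equiv.piCongrRight_apply, RelIso.coe_fn_toEquiv, Pi.map_apply,
      Iso.map_adj_iff, (e _).injective.eq_iff]

variable [∀ i, DecidableEq (V i)]

theorem boxProdPi_top_exists_iso (u w : ∀ i, V i) :
    ∃ φ : (boxProdPi fun i => (⊤ : SimpleGraph (V i))) ≃g boxProdPi fun _ => ⊤, φ u = w :=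
  ⟨boxProdPiCongr fun i => Iso.completeGraph (Equiv.swap (u i) (w i)),
    funext fun _ => Equiv.swap_apply_left _ _⟩

variable [Fintype ι]

theorem boxProdPi_top_adj {u w : ∀ i, V i} :
    (boxProdPi fun i => (⊤ : SimpleGraph (V i))).Adj u w ↔ hammingDist u w = 1 := by
  simp only [boxProdPi_adj, top_adj, hammingDist, Finset.card_eq_one,
    Finset.eq_singleton_iff_unique_mem, Finset.mem_filter, Finset.mem_univ, true_and]
  exact exists_congr fun i => and_congr_right fun _ => forall_congr' fun j => not_imp_comm

theorem hammingDist_update_add_one_s13 [DecidableEq ι] {u w : ∀ i, V i} {i : ι} (h : u i ≠ w i) :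
    hammingDist (Function.update u i (w i)) w + 1 = hammingDist u w := by
  have : univ.filter (fun j => u j ≠ w j) =
      insert i (univ.filter fun j => Function.update u i (w i) j ≠ w j) := by
    ext j
    by_cases hj : j = i <;> simp [hj, h]
  rw [hammingDist, hammingDist, this, Finset.card_insert_of_notMem (by simp)]

theorem boxProdPi_top_exists_walk (u w : ∀ i, V i) :
    ∃ p : (boxProdPi fun i => (⊤ : SimpleGraph (V i))).Walk u w,
      p.length = hammingDist u w := by
  classical
  induction hd : hammingDist u w generalizing u with
  | zero =>
    obtain rfl := hammingDist_eq_zero.mp hd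
    exact ⟨.nil, rfl⟩
  | succ d ih =>
    obtain ⟨i, hi⟩ : ∃ i, u i ≠ w i := by
      by_contra! h
      simp [funext h] at hd
    obtain ⟨p, hp⟩ := ih (Function.update u i (w i))
      (by have := hammingDist_update_add_one_s13 hi; omega)
    have hadj : (boxProdPi fun i => (⊤ : SimpleGraph (V i))).Adj u (Function.update u i (w i)) :=
      ⟨i, by simpa using hi, fun j hj => by simp [hj]⟩
    exact ⟨.cons hadj p, by rw [Walk.length_cons, hp]⟩

theorem hammingDist_le_length_s13 {u w : ∀ i, V i}
    (p : (boxProdPi fun i => (⊤ : SimpleGraph (V i))).Walk u w) :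
    hammingDist u w ≤ p.length := by
  induction p with
  | nil => simp
  | cons h p ih =>
    rw [Walk.length_cons]
    exact (hammingDist_triangle _ _ _).trans (by rw [boxProdPi_top_adj.mp h]; omega)

theorem boxProdPi_top_dist (u w : ∀ i, V i) :
    (boxProdPi fun i => (⊤ : SimpleGraph (V i))).dist u w = hammingDist u w := by
  obtain ⟨p, hp⟩ := boxProdPi_top_exists_walk u w
  refine le_antisymm (hp ▸ dist_le p) ?_
  obtain ⟨q, hq⟩ := p.reachable.exists_walk_length_eq_dist
  exact hq ▸ hammingDist_le_length_s13 q

theorem boxProdPi_top_connected [Nonempty (∀ i, V i)] :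
    (boxProdPi fun i => (⊤ : SimpleGraph (V i))).Connected :=
  ⟨fun u w => (boxProdPi_top_exists_walk u w).elim fun p _ => p.reachable⟩

end BoxProdPi

theorem sum_hammingDist {ι α : Type*} [Fintype ι] [DecidableEq ι] [Fintype α] [DecidableEq α]
    (u : ι → α) :
    (∑ w, hammingDist u w : ℚ) = Fintype.card ι *
      (Fintype.card α ^ Fintype.card ι - Fintype.card α ^ (Fintype.card ι - 1)) := by
  have hcoord : ∀ i, (#{w : ι → α | u i ≠ w i} : ℚ) =
      Fintype.card α ^ Fintype.card ι - Fintype.card α ^ (Fintype.card ι - 1) := fun i => by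
    have hsplit := Finset.card_filter_add_card_filter_not (s := univ)
      (fun w : ι → α => w i = u i)
    have hfix : #{w : ι → α | w i = u i} = Fintype.card α ^ (Fintype.card ι - 1) := by
      simpa using Fintype.card_filter_piFinset_const_eq_of_mem univ i (mem_univ (u i))
    rw [hfix, Finset.card_univ, Fintype.card_fun] at hsplit
    simp only [ne_comm (a := u _)]
    rw [eq_sub_iff_add_eq, add_comm]
    exact_mod_cast hsplit
  have hswap : ∑ w, hammingDist u w = ∑ i, #{w : ι → α | u i ≠ w i} := by
    simp only [hammingDist, Finset.card_filter]
    exact Finset.sum_comm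
  rw [← Nat.cast_sum, hswap, Nat.cast_sum]
  simp only [hcoord, Finset.sum_const, Finset.card_univ, nsmul_eq_mul]

theorem betweenness_completePower_general (n r : ℕ) (v : Fin r → Fin n) :
    betweenness (boxProdPi fun _ : Fin r => (⊤ : SimpleGraph (Fin n))) v =
      (1 / 2) * (((r : ℚ) - 1) * (n : ℚ) ^ r - (r : ℚ) * (n : ℚ) ^ (r - 1) + 1) := by
  have : Nonempty (Fin r → Fin n) := ⟨v⟩
  have hcard : (Fintype.card (Fin r → Fin n) : ℚ) = n ^ r := by simp
  have hdist : ∀ u, ∑ w ∈ univ.erase u,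
      (((boxProdPi fun _ : Fin r => (⊤ : SimpleGraph (Fin n))).dist u w : ℚ) - 1) =
        r * (n ^ r - n ^ (r - 1)) - (n ^ r - 1) := fun u => by
    rw [Finset.sum_sub_distrib, Finset.sum_erase_eq_sub (mem_univ u),
      Finset.sum_erase_eq_sub (mem_univ u)]
    simp [boxProdPi_top_dist, sum_hammingDist]
  have htotal := card_mul_betweenness_eq_sum (boxProdPi_top_exists_iso v)
  rw [sum_betweenness boxProdPi_top_connected] at htotal
  simp only [hdist, sum_const, card_univ, hcard, nsmul_eq_mul] at htotal
  have hN : (n : ℚ) ^ r ≠ 0 := by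
    rw [← hcard]
    exact_mod_cast Fintype.card_ne_zero
  apply mul_left_cancel₀ hN
  rw [htotal]
  ring

/-- For `n ≥ 2`, `r ≥ 1` and any vertex `v` of the `r`-fold Cartesian
power of `K_n`, `B(v) = (1/2)·((r-1)·n^r - r·n^(r-1) + 1)`. -/
theorem betweenness_completePower (n r : ℕ) (hn : 2 ≤ n) (hr : 1 ≤ r)
    (v : Fin r → Fin n) :
    betweenness (boxProdPi fun _ : Fin r => (⊤ : SimpleGraph (Fin n))) v =
      (1 / 2) * (((r : ℚ) - 1) * (n : ℚ) ^ r - (r : ℚ) * (n : ℚ) ^ (r - 1) + 1) :=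
  betweenness_completePower_general n r v
end
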